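/- arXiv:2406.03444 — 2 statements merged into one kernel-verified Lean document; each statement's English description precedes it below -/
import Mathlib

section
/- Let Φ be a Φ-function with Φ ∈ (aDec)_q for some q ∈ [1, ∞) with constant b_Φ(q), and let ε ∈ (0, b_Φ(q)^{-1}). Suppose μ and ν are two probability measures on Ω and X is a subspace of C(Ω). If sup over f ∈ X with ‖f‖_{L^Φ(μ)} < 1 of |∫_Ω Φ(|f|) dν − ∫_Ω Φ(|f|) dμ| is at most ε, then for all f ∈ X: a_Φ(1)^{-1}·(b_Φ(q)^{-1} − ε)·‖f‖_{L^Φ(μ)} ≤ ‖f‖_{L^Φ(ν)} ≤ a_Φ(1)·(1 + ε)·‖f‖_{L^Φ(μ)}. -/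
open MeasureTheory

noncomputable section

/-- The sup-norm (uniform norm) `‖f‖_∞ = sup_{x ∈ Ω} |f x|` of a real-valued function. -/
def supNorm {Ω : Type*} (f : Ω → ℝ) : ℝ := ⨆ x, |f x|

/-- The Luxemburg functional `‖f‖_Φ = inf {λ > 0 : ∫ Φ(|f|/λ) dμ ≤ 1}`. -/
def luxNorm {Ω : Type*} [MeasurableSpace Ω] (μ : Measure Ω) (Φ : ℝ → ℝ) (f : Ω → ℝ) : ℝ :=
  sInf {lam : ℝ | 0 < lam ∧ ∫ x, Φ (|f x| / lam) ∂μ ≤ 1}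

/-- The discrete Luxemburg functional `‖f‖_{Φ,x}` with respect to the uniform discrete
probability measure `(1/m) ∑_{j=1}^m δ_{x_j}`. -/
def discLuxNorm {Ω : Type*} (Φ : ℝ → ℝ) {m : ℕ} (x : Fin m → Ω) (f : Ω → ℝ) : ℝ :=
  sInf {lam : ℝ | 0 < lam ∧ (∑ j, Φ (|f (x j)| / lam)) / (m : ℝ) ≤ 1}

/-- The weighted discrete Luxemburg functional `‖f‖_{Φ,x,λ}` with respect to the discrete
probability measure `∑_{j=1}^m λ_j δ_{x_j}`. -/
def wDiscLuxNorm {Ω : Type*} (Φ : ℝ → ℝ) {m : ℕ} (x : Fin m → Ω) (w : Fin m → ℝ)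
    (f : Ω → ℝ) : ℝ :=
  sInf {lam : ℝ | 0 < lam ∧ (∑ j, w j * Φ (|f (x j)| / lam)) ≤ 1}

/-- `Φ : [0,∞) → [0,∞)` is a Φ-prefunction: increasing, `Φ(0) = 0`, `Φ(0+) = 0`,
`Φ(∞) = ∞` (stated for a function on `ℝ`, with the relevant conditions on `[0,∞)`). -/
structure IsPhiPrefun (Φ : ℝ → ℝ) : Prop where
  mono : MonotoneOn Φ (Set.Ici 0)
  map_zero : Φ 0 = 0
  nonneg : ∀ t : ℝ, 0 ≤ t → 0 ≤ Φ t
  tendsto_zero : Filter.Tendsto Φ (nhdsWithin 0 (Set.Ioi 0)) (nhds 0)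
  tendsto_atTop : Filter.Tendsto Φ Filter.atTop Filter.atTop

/-- `Φ ∈ (aInc)_p` with constant `a`: `t ↦ Φ(t) t^{-p}` is almost increasing on `(0,∞)`. -/
def AIncP (Φ : ℝ → ℝ) (p a : ℝ) : Prop :=
  ∀ s t : ℝ, 0 < s → s < t → Φ s / s ^ p ≤ a * (Φ t / t ^ p)

/-- `Φ ∈ (Inc)_p` : `t ↦ Φ(t) t^{-p}` is increasing on `(0,∞)`. -/
def IncP (Φ : ℝ → ℝ) (p : ℝ) : Prop :=
  ∀ s t : ℝ, 0 < s → s < t → Φ s / s ^ p ≤ Φ t / t ^ p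

/-- `Φ ∈ (Dec)_q` : `t ↦ Φ(t) t^{-q}` is decreasing on `(0,∞)`. -/
def DecQ (Φ : ℝ → ℝ) (q : ℝ) : Prop :=
  ∀ s t : ℝ, 0 < s → s < t → Φ t / t ^ q ≤ Φ s / s ^ q

/-- `Φ ∈ (aDec)_q` with constant `b`: `t ↦ Φ(t) t^{-q}` is almost decreasing on `(0,∞)`. -/
def ADecQ (Φ : ℝ → ℝ) (q b : ℝ) : Prop :=
  ∀ s t : ℝ, 0 < s → s < t → Φ t / t ^ q ≤ b * (Φ s / s ^ q)

/-- `t ↦ Φ(t) t^{-p}` is almost increasing with constant `a` on `(t_*, ∞)`. -/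
def AIncPOn (Φ : ℝ → ℝ) (p a tstar : ℝ) : Prop :=
  ∀ s t : ℝ, tstar < s → s < t → Φ s / s ^ p ≤ a * (Φ t / t ^ p)

/-- `t ↦ Φ(t) t^{-q}` is almost decreasing with constant `b` on `(t_*, ∞)`. -/
def ADecQOn (Φ : ℝ → ℝ) (q b tstar : ℝ) : Prop :=
  ∀ s t : ℝ, tstar < s → s < t → Φ t / t ^ q ≤ b * (Φ s / s ^ q)

/-- Entropy numbers `e_n(F, d)` of a set `F` with respect to a distance-like function `dd`:
the infimum of `ε > 0` such that `F` can be covered by `2^{2^n}` (one, for `n = 0`)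
`ε`-balls centered in `F`. -/
def entropyNumD {X : Type*} (dd : X → X → ℝ) (F : Set X) (n : ℕ) : ℝ :=
  sInf {ε : ℝ | 0 < ε ∧ ∃ T : Finset X, ↑T ⊆ F ∧
    T.card ≤ (if n = 0 then 1 else 2 ^ 2 ^ n) ∧ ∀ f ∈ F, ∃ g ∈ T, dd f g < ε}

/-- Sampling numbers `ϱ_m(F, ‖·‖)`: recovery by linear methods from samples at `m` points. -/
def sampNum {Ω : Type*} (nrm : (Ω → ℝ) → ℝ) (F : Set (Ω → ℝ)) (m : ℕ) : ℝ :=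
  sInf {r : ℝ | ∃ (x : Fin m → Ω) (T : (Fin m → ℝ) →ₗ[ℝ] (Ω → ℝ)),
    r = ⨆ f ∈ F, nrm (fun y => f y - T (fun j => f (x j)) y)}

/-- Modified sampling numbers `ϱ*_m(F, ‖·‖)`: recovery by arbitrary methods mapping into a
subspace of dimension at most `m`, from samples at `m` points. -/
def sampNumStar {Ω : Type*} (nrm : (Ω → ℝ) → ℝ) (F : Set (Ω → ℝ)) (m : ℕ) : ℝ :=
  sInf {r : ℝ | ∃ (x : Fin m → Ω) (Y : Submodule ℝ (Ω → ℝ)), Module.finrank ℝ Y ≤ m ∧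
    ∃ T : (Fin m → ℝ) → Ω → ℝ, (∀ v, T v ∈ Y) ∧
    r = ⨆ f ∈ F, nrm (fun y => f y - T (fun j => f (x j)) y)}

/-- Kolmogorov width `d_N(F, ‖·‖_∞)` : infimum over `N`-dimensional subspaces of `C(Ω)` of the
worst-case best approximation error in the uniform norm. -/
def kolWidth {Ω : Type*} [TopologicalSpace Ω] (F : Set (Ω → ℝ)) (N : ℕ) : ℝ :=
  sInf {r : ℝ | ∃ X : Submodule ℝ (Ω → ℝ), Module.finrank ℝ X = N ∧
    (∀ u ∈ X, Continuous u) ∧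
    r = ⨆ f ∈ F, sInf ((fun u => supNorm (fun y => f y - u y)) '' (X : Set (Ω → ℝ)))}

end

/-!
The Luxemburg functional is positively homogeneous, so it suffices to compare the two functionals
on rescalings `g` of `f` whose `μ`-norm is just below `1`. By `(aDec)_q` and `(aInc)_1` the
modular and the norm control each other: `b⁻¹ ‖g‖^q ≤ ∫ Φ(|g|) ≤ a ‖g‖` when `‖g‖ < 1`, and
`∫ Φ(|g|) ≤ M` with `M > 1` forces `‖g‖ ≤ a M`. The closeness hypothesis moves the modular from
`μ` to `ν` at the cost of `ε`; letting the rescaling tend to the critical one gives the constants.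
-/

open Filter Topology Set
open scoped Pointwise

section Luxemburg

variable {Ω : Type*} [MeasurableSpace Ω] {ρ : Measure Ω} {Φ : ℝ → ℝ} {f : Ω → ℝ}

theorem luxNorm_nonneg : 0 ≤ luxNorm ρ Φ f :=
  Real.sInf_nonneg fun _ h => h.1.le

theorem luxNorm_le_of_integral_le_one {s : ℝ} (hs : 0 < s) (h : ∫ x, Φ (|f x| / s) ∂ρ ≤ 1) :
    luxNorm ρ Φ f ≤ s :=
  csInf_le ⟨0, fun _ h => h.1.le⟩ ⟨hs, h⟩

theorem luxNorm_smul {c : ℝ} (hc : 0 < c) : luxNorm ρ Φ (c • f) = c * luxNorm ρ Φ f := by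
  have hset : {s : ℝ | 0 < s ∧ ∫ x, Φ (|(c • f) x| / s) ∂ρ ≤ 1} =
      c • {s : ℝ | 0 < s ∧ ∫ x, Φ (|f x| / s) ∂ρ ≤ 1} := by
    ext s
    have hdiv (x : Ω) : |(c • f) x| / s = |f x| / (c⁻¹ * s) := by
      rw [Pi.smul_apply, smul_eq_mul, abs_mul, abs_of_pos hc]
      field_simp
    simp only [Set.mem_smul_set_iff_inv_smul_mem₀ hc.ne', mem_ofPred_eq, smul_eq_mul, hdiv,
      mul_pos_iff_of_pos_left (inv_pos.2 hc)]
  rw [luxNorm, hset, Real.sInf_smul_of_nonneg hc.le]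
  rfl

end Luxemburg

section PhiFunction

variable {Φ : ℝ → ℝ}

theorem AIncP.apply_mul_le {a : ℝ} (h : AIncP Φ 1 a) (hΦ0 : Φ 0 = 0) {s t : ℝ} (hs : 0 < s)
    (hs1 : s < 1) (ht : 0 ≤ t) : Φ (s * t) ≤ a * s * Φ t := by
  rcases ht.eq_or_lt with rfl | ht
  · simp [hΦ0]
  have h := h (s * t) t (by positivity) (mul_lt_of_lt_one_left ht hs1)
  rw [Real.rpow_one, Real.rpow_one, div_le_iff₀ (by positivity)] at h
  calc Φ (s * t) ≤ a * (Φ t / t) * (s * t) := h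
    _ = a * s * Φ t := by field_simp

theorem ADecQ.apply_div_le {q b : ℝ} (h : ADecQ Φ q b) (hΦ0 : Φ 0 = 0) {s t : ℝ} (hs : 0 < s)
    (hs1 : s < 1) (ht : 0 ≤ t) : Φ (t / s) ≤ b / s ^ q * Φ t := by
  rcases ht.eq_or_lt with rfl | ht
  · simp [hΦ0]
  have h := h t (t / s) ht ((lt_div_iff₀ hs).2 (mul_lt_of_lt_one_right ht hs1))
  rw [Real.div_rpow ht.le hs.le, div_le_iff₀ (by positivity)] at h
  calc Φ (t / s) ≤ b * (Φ t / t ^ q) * (t ^ q / s ^ q) := h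
    _ = b / s ^ q * Φ t := by field_simp [(Real.rpow_pos_of_pos ht q).ne']

end PhiFunction

namespace IsPhiPrefun

variable {Ω : Type*} [TopologicalSpace Ω] [CompactSpace Ω] [MeasurableSpace Ω]
  [OpensMeasurableSpace Ω] {ρ : Measure Ω} {Φ : ℝ → ℝ} {f : Ω → ℝ}

theorem apply_le_apply (hΦ : IsPhiPrefun Φ) {s t : ℝ} (hs : 0 ≤ s) (hst : s ≤ t) : Φ s ≤ Φ t :=
  hΦ.mono hs (hs.trans hst) hst

theorem integrable_comp_abs (hΦ : IsPhiPrefun Φ) [IsFiniteMeasure ρ] (hf : Continuous f) :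
    Integrable (fun x => Φ |f x|) ρ := by
  obtain ⟨M, hM⟩ := (isCompact_range hf.abs).bddAbove
  have hmono : Monotone fun t => Φ (max t 0) := fun s t hst =>
    hΦ.mono (le_max_right s 0) (le_max_right t 0) (max_le_max_right 0 hst)
  have hmeas : Measurable fun x => Φ |f x| := by
    simpa [Function.comp_def] using hmono.measurable.comp hf.abs.measurable
  refine .of_bound hmeas.aestronglyMeasurable (Φ M) (ae_of_all _ fun x => ?_)
  have hfx : |f x| ≤ M := hM ⟨x, rfl⟩
  rw [Real.norm_of_nonneg (hΦ.nonneg _ (abs_nonneg _))]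
  exact hΦ.apply_le_apply (abs_nonneg _) hfx

theorem integrable_comp_abs_div (hΦ : IsPhiPrefun Φ) [IsFiniteMeasure ρ] (hf : Continuous f)
    {s : ℝ} (hs : 0 < s) : Integrable (fun x => Φ (|f x| / s)) ρ := by
  simpa [abs_div, abs_of_pos hs] using hΦ.integrable_comp_abs (ρ := ρ) (hf.div_const s)

theorem exists_integral_div_le_one (hΦ : IsPhiPrefun Φ) [IsProbabilityMeasure ρ]
    (hf : Continuous f) : ∃ s, 0 < s ∧ ∫ x, Φ (|f x| / s) ∂ρ ≤ 1 := by
  obtain ⟨t, ht1, ht0 : 0 < t⟩ := ((hΦ.tendsto_zero.eventually (ge_mem_nhds one_pos)).and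
    self_mem_nhdsWithin).exists
  obtain ⟨M, hM⟩ := (isCompact_range hf.abs).bddAbove
  have hs : 0 < (|M| + 1) / t := by positivity
  refine ⟨(|M| + 1) / t, hs, ?_⟩
  have hle (x : Ω) : Φ (|f x| / ((|M| + 1) / t)) ≤ Φ t := by
    refine hΦ.apply_le_apply (by positivity) ?_
    rw [div_le_iff₀ hs, mul_div_cancel₀ _ ht0.ne']
    linarith [hM ⟨x, rfl⟩, le_abs_self M]
  calc ∫ x, Φ (|f x| / ((|M| + 1) / t)) ∂ρ ≤ ∫ _, Φ t ∂ρ :=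
        integral_mono (hΦ.integrable_comp_abs_div hf hs) (integrable_const _) hle
    _ ≤ 1 := by simpa using ht1

theorem integral_le_one_of_luxNorm_lt (hΦ : IsPhiPrefun Φ) [IsProbabilityMeasure ρ]
    (hf : Continuous f) {s : ℝ} (hs : luxNorm ρ Φ f < s) : ∫ x, Φ (|f x| / s) ∂ρ ≤ 1 := by
  obtain ⟨t, ⟨ht0, ht1⟩, hts⟩ :=
    (csInf_lt_iff ⟨0, fun _ h => h.1.le⟩ (hΦ.exists_integral_div_le_one hf)).1 hs
  have hs0 : 0 < s := ht0.trans hts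
  refine le_trans (integral_mono_of_nonneg (ae_of_all _ fun x => ?_)
    (hΦ.integrable_comp_abs_div hf ht0) (ae_of_all _ fun x => ?_)) ht1
  · exact hΦ.nonneg _ (by positivity)
  · exact hΦ.apply_le_apply (by positivity) (div_le_div_of_nonneg_left (abs_nonneg _) ht0 hts.le)

theorem luxNorm_rpow_le_mul_integral (hΦ : IsPhiPrefun Φ) [IsFiniteMeasure ρ] (hf : Continuous f)
    {q b : ℝ} (hq : 0 < q) (hb : 0 < b) (hdec : ADecQ Φ q b) (h1 : luxNorm ρ Φ f ≤ 1) :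
    luxNorm ρ Φ f ^ q ≤ b * ∫ x, Φ |f x| ∂ρ := by
  have hbelow : ∀ s ∈ Ioo 0 (luxNorm ρ Φ f), s ^ q ≤ b * ∫ x, Φ |f x| ∂ρ := by
    rintro s ⟨hs0, hs⟩
    by_contra! hlt
    refine hs.not_ge (luxNorm_le_of_integral_le_one hs0 ?_)
    calc ∫ x, Φ (|f x| / s) ∂ρ ≤ ∫ x, b / s ^ q * Φ |f x| ∂ρ :=
          integral_mono_of_nonneg (ae_of_all _ fun x => hΦ.nonneg _ (by positivity))
            ((hΦ.integrable_comp_abs hf).const_mul _) (ae_of_all _ fun x =>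
              hdec.apply_div_le hΦ.map_zero hs0 (hs.trans_le h1) (abs_nonneg _))
      _ = b * (∫ x, Φ |f x| ∂ρ) / s ^ q := by rw [integral_const_mul]; ring
      _ ≤ 1 := (div_le_one (by positivity)).2 hlt.le
  rcases (luxNorm_nonneg (ρ := ρ) (Φ := Φ) (f := f)).eq_or_lt with h0 | hpos
  · rw [← h0, Real.zero_rpow hq.ne']
    exact mul_nonneg hb.le (integral_nonneg fun x => hΦ.nonneg _ (abs_nonneg _))
  · exact le_of_tendsto
      ((Real.continuousAt_rpow_const _ q (Or.inr hq.le)).tendsto.mono_left nhdsWithin_le_nhds)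
      (eventually_of_mem (Ioo_mem_nhdsLT hpos) hbelow)

theorem integral_le_mul_luxNorm (hΦ : IsPhiPrefun Φ) [IsProbabilityMeasure ρ]
    (hf : Continuous f) {a : ℝ} (ha : 0 ≤ a) (hinc : AIncP Φ 1 a) (h1 : luxNorm ρ Φ f < 1) :
    ∫ x, Φ |f x| ∂ρ ≤ a * luxNorm ρ Φ f := by
  have habove : ∀ s ∈ Ioo (luxNorm ρ Φ f) 1, ∫ x, Φ |f x| ∂ρ ≤ a * s := by
    rintro s ⟨hs, hs1⟩
    have hs0 : 0 < s := luxNorm_nonneg.trans_lt hs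
    calc ∫ x, Φ |f x| ∂ρ ≤ ∫ x, a * s * Φ (|f x| / s) ∂ρ :=
          integral_mono_of_nonneg (ae_of_all _ fun x => hΦ.nonneg _ (abs_nonneg _))
            ((hΦ.integrable_comp_abs_div hf hs0).const_mul _) (ae_of_all _ fun x => by
              simpa [mul_div_cancel₀ _ hs0.ne'] using
                hinc.apply_mul_le hΦ.map_zero hs0 hs1 (by positivity : 0 ≤ |f x| / s))
      _ = a * s * ∫ x, Φ (|f x| / s) ∂ρ := integral_const_mul _ _
      _ ≤ a * s := mul_le_of_le_one_right (by positivity) (hΦ.integral_le_one_of_luxNorm_lt hf hs)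
  exact ge_of_tendsto (((continuous_const_mul a).tendsto _).mono_left nhdsWithin_le_nhds)
    (eventually_of_mem (Ioo_mem_nhdsGT h1) habove)

theorem luxNorm_le_mul_of_integral_le (hΦ : IsPhiPrefun Φ) [IsFiniteMeasure ρ]
    (hf : Continuous f) {a M : ℝ} (ha : 1 ≤ a) (hinc : AIncP Φ 1 a) (hM : 1 < M)
    (h : ∫ x, Φ |f x| ∂ρ ≤ M) : luxNorm ρ Φ f ≤ a * M := by
  have haM : 1 < a * M := one_lt_mul_of_le_of_lt ha hM
  have haM0 : 0 < a * M := one_pos.trans haM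
  refine luxNorm_le_of_integral_le_one haM0 ?_
  calc ∫ x, Φ (|f x| / (a * M)) ∂ρ ≤ ∫ x, a * (a * M)⁻¹ * Φ |f x| ∂ρ :=
        integral_mono_of_nonneg (ae_of_all _ fun x => hΦ.nonneg _ (by positivity))
          ((hΦ.integrable_comp_abs hf).const_mul _) (ae_of_all _ fun x => by
            simpa [div_eq_inv_mul] using hinc.apply_mul_le hΦ.map_zero (inv_pos.2 haM0)
              (inv_lt_one_of_one_lt₀ haM) (abs_nonneg (f x)))
    _ = M⁻¹ * ∫ x, Φ |f x| ∂ρ := by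
        rw [integral_const_mul]
        field_simp
    _ ≤ M⁻¹ * M := mul_le_mul_of_nonneg_left h (by positivity)
    _ = 1 := inv_mul_cancel₀ (by positivity)

theorem le_mul_luxNorm_of_le_integral (hΦ : IsPhiPrefun Φ) [IsProbabilityMeasure ρ]
    (hf : Continuous f) {a m : ℝ} (ha : 0 ≤ a) (hinc : AIncP Φ 1 a)
    (hm : m ≤ ∫ x, Φ |f x| ∂ρ) (hma : m ≤ a) : m ≤ a * luxNorm ρ Φ f := by
  rcases lt_or_ge (luxNorm ρ Φ f) 1 with h1 | h1
  · exact hm.trans (hΦ.integral_le_mul_luxNorm hf ha hinc h1)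
  · exact hma.trans (le_mul_of_one_le_right ha h1)

end IsPhiPrefun

section Comparison

variable {Ω : Type*} [TopologicalSpace Ω] [CompactSpace Ω] [MeasurableSpace Ω]
  [OpensMeasurableSpace Ω] {Φ : ℝ → ℝ} {μ ν : Measure Ω} [IsProbabilityMeasure μ]
  [IsProbabilityMeasure ν] {X : Submodule ℝ (Ω → ℝ)}

theorem IsPhiPrefun.luxNorm_le_mul_luxNorm_of_integral_le_add (hΦ : IsPhiPrefun Φ)
    (hX : ∀ f ∈ X, Continuous f) {a ε : ℝ} (ha : 1 ≤ a) (hinc : AIncP Φ 1 a) (hε : 0 < ε)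
    (hclose : ∀ f ∈ X, luxNorm μ Φ f < 1 → ∫ x, Φ |f x| ∂ν ≤ (∫ x, Φ |f x| ∂μ) + ε)
    {f : Ω → ℝ} (hf : f ∈ X) : luxNorm ν Φ f ≤ a * (1 + ε) * luxNorm μ Φ f := by
  have habove : ∀ s, luxNorm μ Φ f < s → luxNorm ν Φ f ≤ a * (1 + ε) * s := by
    intro s hs
    have hs0 : 0 < s := luxNorm_nonneg.trans_lt hs
    have hg : s⁻¹ • f ∈ X := X.smul_mem _ hf
    have hgμ : luxNorm μ Φ (s⁻¹ • f) < 1 := by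
      rwa [luxNorm_smul (inv_pos.2 hs0), inv_mul_lt_one₀ hs0]
    have hintμ : ∫ x, Φ |(s⁻¹ • f) x| ∂μ ≤ 1 := by
      simpa using hΦ.integral_le_one_of_luxNorm_lt (hX _ hg) hgμ
    have hgν := hΦ.luxNorm_le_mul_of_integral_le (hX _ hg) ha hinc (by linarith)
      ((hclose _ hg hgμ).trans (add_le_add_left hintμ ε))
    rwa [luxNorm_smul (inv_pos.2 hs0), inv_mul_le_iff₀ hs0, mul_comm s] at hgν
  exact ge_of_tendsto (((continuous_const_mul _).tendsto _).mono_left nhdsWithin_le_nhds)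
    (eventually_of_mem (self_mem_nhdsWithin : Ioi _ ∈ 𝓝[>] luxNorm μ Φ f) habove)

theorem IsPhiPrefun.mul_luxNorm_le_luxNorm_of_sub_le_integral (hΦ : IsPhiPrefun Φ)
    (hX : ∀ f ∈ X, Continuous f) {a q b ε : ℝ} (ha : 1 ≤ a) (hinc : AIncP Φ 1 a) (hq : 0 < q)
    (hb : 1 ≤ b) (hdec : ADecQ Φ q b) (hε : 0 ≤ ε)
    (hclose : ∀ f ∈ X, luxNorm μ Φ f < 1 → (∫ x, Φ |f x| ∂μ) - ε ≤ ∫ x, Φ |f x| ∂ν)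
    {f : Ω → ℝ} (hf : f ∈ X) : a⁻¹ * (b⁻¹ - ε) * luxNorm μ Φ f ≤ luxNorm ν Φ f := by
  set θ := luxNorm μ Φ f
  have hθ0 : 0 ≤ θ := luxNorm_nonneg
  rcases hθ0.eq_or_lt with hθ | hθ
  · rw [← hθ, mul_zero]
    exact luxNorm_nonneg
  have hbelow : ∀ r ∈ Ioo 0 1, θ * (a⁻¹ * (b⁻¹ * r ^ q - ε)) ≤ luxNorm ν Φ f := by
    rintro r ⟨hr0, hr1⟩
    have hc : 0 < r / θ := div_pos hr0 hθ
    have hg : (r / θ) • f ∈ X := X.smul_mem _ hf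
    have hgμ : luxNorm μ Φ ((r / θ) • f) = r := by
      rw [luxNorm_smul hc, div_mul_cancel₀ _ hθ.ne']
    have hintμ :=
      hΦ.luxNorm_rpow_le_mul_integral (hX _ hg) hq (by linarith) hdec (hgμ.trans_le hr1.le)
    rw [hgμ, ← inv_mul_le_iff₀ (by linarith)] at hintμ
    have hrq : b⁻¹ * r ^ q ≤ 1 :=
      mul_le_one₀ (inv_le_one_of_one_le₀ hb) (Real.rpow_nonneg hr0.le q)
        (Real.rpow_le_one hr0.le hr1.le hq.le)
    have hgν := hΦ.le_mul_luxNorm_of_le_integral (hX _ hg) (by linarith) hinc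
      ((sub_le_sub_right hintμ ε).trans (hclose _ hg (hgμ.trans_lt hr1))) (by linarith)
    rw [luxNorm_smul hc, ← inv_mul_le_iff₀ (by linarith)] at hgν
    calc θ * (a⁻¹ * (b⁻¹ * r ^ q - ε)) ≤ θ * (r / θ * luxNorm ν Φ f) :=
          mul_le_mul_of_nonneg_left hgν hθ.le
      _ = r * luxNorm ν Φ f := by field_simp [hθ.ne']
      _ ≤ luxNorm ν Φ f := mul_le_of_le_one_left luxNorm_nonneg hr1.le
  have hlim : Tendsto (fun r : ℝ => θ * (a⁻¹ * (b⁻¹ * r ^ q - ε))) (𝓝[<] 1)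
      (𝓝 (a⁻¹ * (b⁻¹ - ε) * θ)) := by
    have hcont : ContinuousAt (fun r : ℝ => θ * (a⁻¹ * (b⁻¹ * r ^ q - ε))) 1 := by
      fun_prop (disch := norm_num)
    simpa [mul_comm, mul_left_comm] using hcont.tendsto.mono_left nhdsWithin_le_nhds
  exact le_of_tendsto hlim (eventually_of_mem (Ioo_mem_nhdsLT one_pos) hbelow)

end Comparison

theorem statement5_general {Ω : Type} [MetricSpace Ω] [CompactSpace Ω] [MeasurableSpace Ω]
    [BorelSpace Ω]
    (Φ : ℝ → ℝ) (hpre : IsPhiPrefun Φ) (a1 : ℝ) (ha1 : 1 ≤ a1) (hA1 : AIncP Φ 1 a1)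
    (q : ℝ) (hq : 1 ≤ q) (b : ℝ) (hb : 1 ≤ b) (hdec : ADecQ Φ q b)
    (ε : ℝ) (hε0 : 0 < ε)
    (μ ν : Measure Ω) [IsProbabilityMeasure μ] [IsProbabilityMeasure ν]
    (X : Submodule ℝ (Ω → ℝ)) (hXcont : ∀ f ∈ X, Continuous f)
    (hclose : ∀ f ∈ X, luxNorm μ Φ f < 1 →
      |(∫ x, Φ (|f x|) ∂ν) - ∫ x, Φ (|f x|) ∂μ| ≤ ε) :
    ∀ f ∈ X,
      a1⁻¹ * (b⁻¹ - ε) * luxNorm μ Φ f ≤ luxNorm ν Φ f ∧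
      luxNorm ν Φ f ≤ a1 * (1 + ε) * luxNorm μ Φ f := by
  intro f hf
  constructor
  · refine hpre.mul_luxNorm_le_luxNorm_of_sub_le_integral hXcont ha1 hA1 (by linarith) hb hdec
      hε0.le (fun g hg hg1 => ?_) hf
    linarith [(abs_le.1 (hclose g hg hg1)).1]
  · refine hpre.luxNorm_le_mul_luxNorm_of_integral_le_add hXcont ha1 hA1 hε0
      (fun g hg hg1 => ?_) hf
    linarith [(abs_le.1 (hclose g hg hg1)).2]

/-- Lemma lem5. Let `Φ` be a Φ-function with `Φ ∈ (aDec)_q` with constant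
`b_Φ(q)`, and `ε ∈ (0, b_Φ(q)⁻¹)`. If the integrals `∫ Φ(|f|) dν` and `∫ Φ(|f|) dμ` differ by
at most `ε` for all `f` in a subspace `X ⊂ C(Ω)` with `‖f‖_{L^Φ(μ)} < 1`, then the Luxemburg
functionals for `μ` and `ν` are equivalent on `X` with the stated constants. -/
theorem statement5 {Ω : Type} [MetricSpace Ω] [CompactSpace Ω] [MeasurableSpace Ω]
    [BorelSpace Ω]
    (Φ : ℝ → ℝ) (hpre : IsPhiPrefun Φ) (a1 : ℝ) (ha1 : 1 ≤ a1) (hA1 : AIncP Φ 1 a1)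
    (q : ℝ) (hq : 1 ≤ q) (b : ℝ) (hb : 1 ≤ b) (hdec : ADecQ Φ q b)
    (ε : ℝ) (hε0 : 0 < ε) (hεb : ε < b⁻¹)
    (μ ν : Measure Ω) [IsProbabilityMeasure μ] [IsProbabilityMeasure ν]
    (X : Submodule ℝ (Ω → ℝ)) (hXcont : ∀ f ∈ X, Continuous f)
    (hclose : ∀ f ∈ X, luxNorm μ Φ f < 1 →
      |(∫ x, Φ (|f x|) ∂ν) - ∫ x, Φ (|f x|) ∂μ| ≤ ε) :
    ∀ f ∈ X,
      a1⁻¹ * (b⁻¹ - ε) * luxNorm μ Φ f ≤ luxNorm ν Φ f ∧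
      luxNorm ν Φ f ≤ a1 * (1 + ε) * luxNorm μ Φ f :=
  statement5_general Φ hpre a1 ha1 hA1 q hq b hb hdec ε hε0 μ ν X hXcont hclose
end

section
/- Let p ≥ 1, D ≥ 1, and let Φ, Ψ be Φ-functions with Φ, Ψ ∈ (aInc)_p. Let μ be a probability measure on Ω, ν a discrete probability measure supported on a finite subset of Ω, and X_N an N-dimensional subspace of C(Ω) such that ‖u‖_{L^Φ(μ)} ≤ D·‖u‖_{L^Ψ(ν)} for all u ∈ X_N. Then for every f ∈ C(Ω), ‖f − ℓ_{L^Ψ(ν),X_N}(f)‖_{L^Φ(μ)} ≤ C(Φ, Ψ, p, D)·d(f, X_N)_∞, where ℓ_{L^Ψ(ν),X_N}(f) := arg min_{u ∈ X_N} ‖f − u‖_{L^Ψ(ν)}, d(f, X_N)_∞ := inf_{u ∈ X_N}‖f − u‖_∞, and C(Φ, Ψ, p, D) = C_Φ·(2·a_Φ(p)^{1/p}·(Φ(1)+1)^{1/p} + 4·D·C_Ψ·a_Ψ(p)^{1/p}·(Ψ(1)+1)^{1/p}), with C_Φ and C_Ψ the quasi-triangle constants of ‖·‖_Φ and ‖·‖_Ψ.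 -/
open MeasureTheory

/-! The minimizer `g` is compared with an arbitrary `b ∈ X`: on `X` the `L^Φ(μ)`-norm is dominated
by the `L^Ψ(ν)`-norm, and `‖b - g‖_{L^Ψ(ν)} ≤ 2 C_Ψ ‖f - b‖_{L^Ψ(ν)}` by minimality of `g`.
Both Luxemburg norms of `f - b` are at most a constant times `‖f - b‖_∞`, because under `(aInc)_p`
a function bounded by `M` on a probability space has Luxemburg norm at most
`a^{1/p} (Φ(1) + 1)^{1/p} M`. Taking the infimum over `b` gives the bound. -/

theorem supNorm_nonneg {Ω : Type*} (f : Ω → ℝ) : 0 ≤ supNorm f :=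
  Real.iSup_nonneg fun _ => abs_nonneg _

theorem abs_le_supNorm {Ω : Type*} [TopologicalSpace Ω] [CompactSpace Ω] {f : Ω → ℝ}
    (hf : Continuous f) (x : Ω) : |f x| ≤ supNorm f :=
  le_ciSup (isCompact_range hf.abs).bddAbove x

theorem luxNorm_neg {Ω : Type*} [MeasurableSpace Ω] (ρ : Measure Ω) (Θ : ℝ → ℝ) (f : Ω → ℝ) :
    luxNorm ρ Θ (-f) = luxNorm ρ Θ f := by
  simp only [luxNorm, Pi.neg_apply, abs_neg]

theorem luxNorm_sub_comm {Ω : Type*} [MeasurableSpace Ω] (ρ : Measure Ω) (Θ : ℝ → ℝ)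
    (f g : Ω → ℝ) : luxNorm ρ Θ (f - g) = luxNorm ρ Θ (g - f) := by
  rw [← neg_sub, luxNorm_neg]

theorem luxNorm_le_of_integral_le_one_s16 {Ω : Type*} [MeasurableSpace Ω] {ρ : Measure Ω}
    {Θ : ℝ → ℝ} {f : Ω → ℝ} {lam : ℝ} (hlam : 0 < lam) (h : ∫ x, Θ (|f x| / lam) ∂ρ ≤ 1) :
    luxNorm ρ Θ f ≤ lam :=
  csInf_le ⟨0, fun _ hc => hc.1.le⟩ ⟨hlam, h⟩

theorem IsPhiPrefun.one_le_rpow_mul_rpow {Θ : ℝ → ℝ} (hΘ : IsPhiPrefun Θ) {a q : ℝ}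
    (ha : 1 ≤ a) (hq : 0 ≤ q) : 1 ≤ a ^ q * (Θ 1 + 1) ^ q :=
  one_le_mul_of_one_le_of_one_le (Real.one_le_rpow ha hq)
    (Real.one_le_rpow (le_add_of_nonneg_left (hΘ.nonneg 1 zero_le_one)) hq)

theorem AIncP.apply_le_one {Θ : ℝ → ℝ} {p a : ℝ} (hΘ : IsPhiPrefun Θ) (hA : AIncP Θ p a)
    (hp : 0 < p) (ha : 1 ≤ a) {t : ℝ} (ht : 0 ≤ t)
    (htK : t * (a ^ (1 / p) * (Θ 1 + 1) ^ (1 / p)) < 1) : Θ t ≤ 1 := by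
  rcases ht.eq_or_lt with rfl | ht
  · simp [hΘ.map_zero]
  have hΘ1 : 0 ≤ Θ 1 := hΘ.nonneg 1 zero_le_one
  have hK := hΘ.one_le_rpow_mul_rpow ha (one_div_nonneg.2 hp.le)
  have ht1 : t < 1 := by nlinarith
  have htp : t ^ p * (a * (Θ 1 + 1)) < 1 := by
    have hpow : (t * (a ^ (1 / p) * (Θ 1 + 1) ^ (1 / p))) ^ p = t ^ p * (a * (Θ 1 + 1)) := by
      rw [← Real.mul_rpow (by linarith) (by linarith), Real.mul_rpow ht.le (by positivity),
        ← Real.rpow_mul (by nlinarith), one_div_mul_cancel hp.ne', Real.rpow_one]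
    exact hpow ▸ Real.rpow_lt_one (by positivity) htK hp
  have hΘt : Θ t ≤ a * Θ 1 * t ^ p := by
    have := hA t 1 ht ht1
    rwa [Real.one_rpow, div_one, div_le_iff₀ (Real.rpow_pos_of_pos ht p)] at this
  nlinarith [Real.rpow_nonneg ht.le p]

theorem luxNorm_le_of_abs_le {Ω : Type*} [MeasurableSpace Ω] (ρ : Measure Ω)
    [IsProbabilityMeasure ρ] {Θ : ℝ → ℝ} {p a : ℝ} (hΘ : IsPhiPrefun Θ) (hA : AIncP Θ p a)
    (hp : 0 < p) (ha : 1 ≤ a) {f : Ω → ℝ} {M : ℝ} (hM : 0 ≤ M) (hf : ∀ x, |f x| ≤ M) :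
    luxNorm ρ Θ f ≤ a ^ (1 / p) * (Θ 1 + 1) ^ (1 / p) * M := by
  set K := a ^ (1 / p) * (Θ 1 + 1) ^ (1 / p)
  have hK : 0 ≤ K := zero_le_one.trans (hΘ.one_le_rpow_mul_rpow ha (one_div_nonneg.2 hp.le))
  refine le_of_forall_gt_imp_ge_of_dense fun lam hlam => ?_
  have hlam0 : 0 < lam := (mul_nonneg hK hM).trans_lt hlam
  have hle : ∀ x, Θ (|f x| / lam) ≤ 1 := fun x =>
    hA.apply_le_one hΘ hp ha (by positivity) <| calc
      |f x| / lam * K ≤ M / lam * K := by gcongr; exact hf x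
      _ = K * M / lam := by ring
      _ < 1 := (div_lt_one hlam0).2 hlam
  refine luxNorm_le_of_integral_le_one_s16 hlam0 ((le_abs_self _).trans ?_)
  have hbound : ∀ᵐ x ∂ρ, ‖Θ (|f x| / lam)‖ ≤ 1 := ae_of_all _ fun x => by
    rw [Real.norm_of_nonneg (hΘ.nonneg _ (by positivity))]
    exact hle x
  simpa using norm_integral_le_of_norm_le_const hbound

theorem luxNorm_sub_le_of_isMinOn {Ω : Type*} [TopologicalSpace Ω] [MeasurableSpace Ω]
    {μ ν : Measure Ω} {Φ Ψ : ℝ → ℝ} {CΦ CΨ D : ℝ} (hCΦ0 : 0 ≤ CΦ) (hCΨ0 : 0 ≤ CΨ) (hD : 0 ≤ D)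
    (hCΦ : ∀ f g : Ω → ℝ, Continuous f → Continuous g →
      luxNorm μ Φ (f + g) ≤ CΦ * (luxNorm μ Φ f + luxNorm μ Φ g))
    (hCΨ : ∀ f g : Ω → ℝ, Continuous f → Continuous g →
      luxNorm ν Ψ (f + g) ≤ CΨ * (luxNorm ν Ψ f + luxNorm ν Ψ g))
    {X : Submodule ℝ (Ω → ℝ)} (hXcont : ∀ u ∈ X, Continuous u)
    (hDom : ∀ u ∈ X, luxNorm μ Φ u ≤ D * luxNorm ν Ψ u)
    {f g b : Ω → ℝ} (hf : Continuous f) (hg : g ∈ X)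
    (hmin : IsMinOn (fun u => luxNorm ν Ψ (f - u)) X g) (hb : b ∈ X) :
    luxNorm μ Φ (f - g) ≤ CΦ * (luxNorm μ Φ (f - b) + 2 * D * CΨ * luxNorm ν Ψ (f - b)) := by
  have hgc := hXcont g hg
  have hbc := hXcont b hb
  have hbg : luxNorm ν Ψ (b - g) ≤ 2 * CΨ * luxNorm ν Ψ (f - b) := calc
    luxNorm ν Ψ (b - g) = luxNorm ν Ψ ((b - f) + (f - g)) := by rw [sub_add_sub_cancel]
    _ ≤ CΨ * (luxNorm ν Ψ (b - f) + luxNorm ν Ψ (f - g)) := hCΨ _ _ (hbc.sub hf) (hf.sub hgc)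
    _ ≤ CΨ * (luxNorm ν Ψ (f - b) + luxNorm ν Ψ (f - b)) := by
      rw [luxNorm_sub_comm ν Ψ b f]
      gcongr
      exact isMinOn_iff.mp hmin b hb
    _ = 2 * CΨ * luxNorm ν Ψ (f - b) := by ring
  calc luxNorm μ Φ (f - g) = luxNorm μ Φ ((f - b) + (b - g)) := by rw [sub_add_sub_cancel]
    _ ≤ CΦ * (luxNorm μ Φ (f - b) + luxNorm μ Φ (b - g)) := hCΦ _ _ (hf.sub hbc) (hbc.sub hgc)
    _ ≤ CΦ * (luxNorm μ Φ (f - b) + D * luxNorm ν Ψ (b - g)) := by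
      gcongr
      exact hDom _ (X.sub_mem hb hg)
    _ ≤ CΦ * (luxNorm μ Φ (f - b) + D * (2 * CΨ * luxNorm ν Ψ (f - b))) := by gcongr
    _ = CΦ * (luxNorm μ Φ (f - b) + 2 * D * CΨ * luxNorm ν Ψ (f - b)) := by ring

theorem le_mul_csInf_image {α : Type*} {s : Set α} (hs : s.Nonempty) (F : α → ℝ) {C L : ℝ}
    (hC : 0 < C) (h : ∀ b ∈ s, L ≤ C * F b) : L ≤ C * sInf (F '' s) := by
  rw [← div_le_iff₀' hC]
  exact le_csInf (hs.image F) (Set.forall_mem_image.2 fun b hb => (div_le_iff₀' hC).2 (h b hb))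

theorem statement16_general {Ω : Type} [MetricSpace Ω] [CompactSpace Ω] [MeasurableSpace Ω]
    (p : ℝ) (hp : 1 ≤ p) (D : ℝ) (hD : 1 ≤ D)
    (Φ Ψ : ℝ → ℝ) (hpreΦ : IsPhiPrefun Φ) (hpreΨ : IsPhiPrefun Ψ)
    (aΦ : ℝ) (haΦ : 1 ≤ aΦ) (hAΦ : AIncP Φ p aΦ)
    (aΨ : ℝ) (haΨ : 1 ≤ aΨ) (hAΨ : AIncP Ψ p aΨ)
    (μ ν : Measure Ω) [IsProbabilityMeasure μ] [IsProbabilityMeasure ν]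
    (CΦ CΨ : ℝ) (hCΦ0 : 0 < CΦ) (hCΨ0 : 0 < CΨ)
    (hCΦ : ∀ f g : Ω → ℝ, Continuous f → Continuous g →
      luxNorm μ Φ (f + g) ≤ CΦ * (luxNorm μ Φ f + luxNorm μ Φ g))
    (hCΨ : ∀ f g : Ω → ℝ, Continuous f → Continuous g →
      luxNorm ν Ψ (f + g) ≤ CΨ * (luxNorm ν Ψ f + luxNorm ν Ψ g))
    (X : Submodule ℝ (Ω → ℝ)) (hXcont : ∀ u ∈ X, Continuous u)
    (hDom : ∀ u ∈ X, luxNorm μ Φ u ≤ D * luxNorm ν Ψ u) :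
    ∀ f : Ω → ℝ, Continuous f →
    ∀ g ∈ X, (∀ u ∈ X, luxNorm ν Ψ (fun y => f y - g y) ≤ luxNorm ν Ψ (fun y => f y - u y)) →
      luxNorm μ Φ (fun y => f y - g y) ≤
        (CΦ * (2 * aΦ ^ (1 / p) * (Φ 1 + 1) ^ (1 / p) +
          4 * D * CΨ * aΨ ^ (1 / p) * (Ψ 1 + 1) ^ (1 / p))) *
        sInf ((fun u => supNorm (fun y => f y - u y)) '' (X : Set (Ω → ℝ))) := by
  intro f hf g hg hmin
  have hp0 : 0 < p := by linarith
  have hD0 : 0 ≤ D := by linarith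
  have hKΦ := hpreΦ.one_le_rpow_mul_rpow haΦ (one_div_nonneg.2 hp0.le)
  have hKΨ := hpreΨ.one_le_rpow_mul_rpow haΨ (one_div_nonneg.2 hp0.le)
  have hDCΨ : 0 ≤ D * CΨ := mul_nonneg hD0 hCΨ0.le
  have hC : 0 < 2 * aΦ ^ (1 / p) * (Φ 1 + 1) ^ (1 / p) +
      4 * D * CΨ * aΨ ^ (1 / p) * (Ψ 1 + 1) ^ (1 / p) := by
    nlinarith
  refine le_mul_csInf_image ⟨0, X.zero_mem⟩ _ (mul_pos hCΦ0 hC) fun b hb => ?_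
  show luxNorm μ Φ (f - g) ≤ _ * supNorm (f - b)
  have hfb : ∀ x, |(f - b) x| ≤ supNorm (f - b) := abs_le_supNorm (hf.sub (hXcont b hb))
  have hE := supNorm_nonneg (f - b)
  calc luxNorm μ Φ (f - g)
      ≤ CΦ * (luxNorm μ Φ (f - b) + 2 * D * CΨ * luxNorm ν Ψ (f - b)) :=
        luxNorm_sub_le_of_isMinOn hCΦ0.le hCΨ0.le hD0 hCΦ hCΨ hXcont hDom hf hg
          (isMinOn_iff.mpr hmin) hb
    _ ≤ CΦ * (aΦ ^ (1 / p) * (Φ 1 + 1) ^ (1 / p) * supNorm (f - b) +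
          2 * D * CΨ * (aΨ ^ (1 / p) * (Ψ 1 + 1) ^ (1 / p) * supNorm (f - b))) := by
        gcongr
        · exact luxNorm_le_of_abs_le μ hpreΦ hAΦ hp0 haΦ hE hfb
        · exact luxNorm_le_of_abs_le ν hpreΨ hAΨ hp0 haΨ hE hfb
    _ ≤ _ := by nlinarith [mul_nonneg hDCΨ (mul_nonneg (zero_le_one.trans hKΨ) hE),
        mul_nonneg (zero_le_one.trans hKΦ) hE]

/-- Lemma lem7.1. Let `Φ, Ψ ∈ (aInc)_p` be Φ-functions with quasi-triangle
constants `C_Φ` (for `‖·‖_{L^Φ(μ)}`) and `C_Ψ` (for `‖·‖_{L^Ψ(ν)}`), `μ` a probability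
measure, `ν` a discrete probability measure on a finite subset of `Ω`, and `X_N ⊂ C(Ω)` an
`N`-dimensional subspace with `‖u‖_{L^Φ(μ)} ≤ D ‖u‖_{L^Ψ(ν)}` on `X_N`. Then for every
`f ∈ C(Ω)` and every minimizer `g = ℓ_{L^Ψ(ν),X_N}(f)` of `u ↦ ‖f − u‖_{L^Ψ(ν)}` over `X_N`,
`‖f − g‖_{L^Φ(μ)} ≤ C_Φ (2 a_Φ(p)^{1/p}(Φ(1)+1)^{1/p} + 4 D C_Ψ a_Ψ(p)^{1/p}(Ψ(1)+1)^{1/p})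
· d(f, X_N)_∞`. -/
theorem statement16 {Ω : Type} [MetricSpace Ω] [CompactSpace Ω] [MeasurableSpace Ω]
    [BorelSpace Ω]
    (p : ℝ) (hp : 1 ≤ p) (D : ℝ) (hD : 1 ≤ D)
    (Φ Ψ : ℝ → ℝ) (hpreΦ : IsPhiPrefun Φ) (hpreΨ : IsPhiPrefun Ψ)
    (hphiw : ∃ a : ℝ, 1 ≤ a ∧ AIncP Φ 1 a) (hpsiw : ∃ a : ℝ, 1 ≤ a ∧ AIncP Ψ 1 a)
    (aΦ : ℝ) (haΦ : 1 ≤ aΦ) (hAΦ : AIncP Φ p aΦ)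
    (aΨ : ℝ) (haΨ : 1 ≤ aΨ) (hAΨ : AIncP Ψ p aΨ)
    (μ ν : Measure Ω) [IsProbabilityMeasure μ] [IsProbabilityMeasure ν]
    (hνdisc : ∃ s : Set Ω, s.Finite ∧ ν sᶜ = 0)
    (CΦ CΨ : ℝ) (hCΦ0 : 0 < CΦ) (hCΨ0 : 0 < CΨ)
    (hCΦ : ∀ f g : Ω → ℝ, Continuous f → Continuous g →
      luxNorm μ Φ (f + g) ≤ CΦ * (luxNorm μ Φ f + luxNorm μ Φ g))
    (hCΨ : ∀ f g : Ω → ℝ, Continuous f → Continuous g →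
      luxNorm ν Ψ (f + g) ≤ CΨ * (luxNorm ν Ψ f + luxNorm ν Ψ g))
    (X : Submodule ℝ (Ω → ℝ)) (hXcont : ∀ u ∈ X, Continuous u)
    (N : ℕ) (hrank : Module.finrank ℝ X = N)
    (hDom : ∀ u ∈ X, luxNorm μ Φ u ≤ D * luxNorm ν Ψ u) :
    ∀ f : Ω → ℝ, Continuous f →
    ∀ g ∈ X, (∀ u ∈ X, luxNorm ν Ψ (fun y => f y - g y) ≤ luxNorm ν Ψ (fun y => f y - u y)) →
      luxNorm μ Φ (fun y => f y - g y) ≤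
        (CΦ * (2 * aΦ ^ (1 / p) * (Φ 1 + 1) ^ (1 / p) +
          4 * D * CΨ * aΨ ^ (1 / p) * (Ψ 1 + 1) ^ (1 / p))) *
        sInf ((fun u => supNorm (fun y => f y - u y)) '' (X : Set (Ω → ℝ))) :=
  statement16_general p hp D hD Φ Ψ hpreΦ hpreΨ aΦ haΦ hAΦ aΨ haΨ hAΨ μ ν CΦ CΨ hCΦ0 hCΨ0 hCΦ hCΨ X
    hXcont hDom
end
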